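/- (Lemma: linear convergence of a_t.) Write w* = v* − 𝟙/√p and let 0 < m ≤ M and δ > 0. Suppose the sequence a_{t+1} = a_t − η G_a(w_t, a_t) with η ≤ 5π²/(4(k+π−1)²) is generated along a sequence (w_t) with, for all t, ‖w_t + 𝟙/√p‖₂ = 1, ‖w_t − w*‖₂² ≤ δ, and m ≤ a_tᵀa* ≤ M. Then there are constants C, c > 0 depending only on ‖a*‖₂ and M (the paper gives C = 5, c = 4) such that for all t ≥ (c/η)·log(‖a_0 − a*‖₂²/δ), one has ‖a_t − a*‖₂² ≤ Cδ. -/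

import Mathlib

open Real
open scoped BigOperators

noncomputable section

/-- Euclidean dot product on `ℝ^n`. -/
def dotp {n : ℕ} (u v : Fin n → ℝ) : ℝ := ∑ i, u i * v i

/-- Euclidean norm `‖u‖₂` on `ℝ^n`. -/
def nrm {n : ℕ} (u : Fin n → ℝ) : ℝ := Real.sqrt (dotp u u)

/-- The shortcut vector `𝟙/√p ∈ ℝ^p`. -/
def sc (p : ℕ) : Fin p → ℝ := fun _ => 1 / Real.sqrt p

/-- The angle kernel `g(φ) = (π − φ)cos φ + sin φ`. -/
def gker (φ : ℝ) : ℝ := (π - φ) * Real.cos φ + Real.sin φ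

/-- The angle `φ(w) = arccos((𝟙/√p + w)ᵀ v*)`. -/
def phiAngle {p : ℕ} (vstar w : Fin p → ℝ) : ℝ := Real.arccos (dotp (sc p + w) vstar)

/-- Population gradient map with respect to the output weight `a`:
`G_a(w,a) = (1/(2π))(𝟙𝟙ᵀ + (π−1)I)a − (1/(2π))(𝟙𝟙ᵀ + (g(φ(w))−1)I)a*`. -/
def Ga {p k : ℕ} (vstar : Fin p → ℝ) (astar : Fin k → ℝ)
    (w : Fin p → ℝ) (a : Fin k → ℝ) : Fin k → ℝ :=
  fun i => (1 / (2 * π)) * ((∑ j, a j) + (π - 1) * a i)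
    - (1 / (2 * π)) * ((∑ j, astar j) + (gker (phiAngle vstar w) - 1) * astar i)

/-- Population gradient map with respect to the convolutional weight `w`:
`G_w(w,a) = −((aᵀa*)(π − φ(w))/(2π))(I − vvᵀ)v*`, where `v = 𝟙/√p + w`. -/
def Gw {p k : ℕ} (vstar : Fin p → ℝ) (astar : Fin k → ℝ)
    (w : Fin p → ℝ) (a : Fin k → ℝ) : Fin p → ℝ :=
  fun i => -(dotp a astar * (π - phiAngle vstar w) / (2 * π))
    * (vstar i - dotp (sc p + w) vstar * (sc p + w) i)

/-- One gradient descent step on `w` followed by the normalization step: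
`w̃⁺ = w − η_w G_w(w,a)`, `w⁺ = (𝟙/√p + w̃⁺)/‖𝟙/√p + w̃⁺‖₂ − 𝟙/√p`. -/
def wStep {p k : ℕ} (vstar : Fin p → ℝ) (astar : Fin k → ℝ) (ηw : ℝ)
    (wt : Fin p → ℝ) (at' : Fin k → ℝ) : Fin p → ℝ :=
  (nrm (sc p + (wt - ηw • Gw vstar astar wt at')))⁻¹ •
    (sc p + (wt - ηw • Gw vstar astar wt at')) - sc p

/-- One gradient descent step on `a`: `a⁺ = a − η_a G_a(w,a)`. -/
def aStep {p k : ℕ} (vstar : Fin p → ℝ) (astar : Fin k → ℝ) (ηa : ℝ)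
    (wt : Fin p → ℝ) (at' : Fin k → ℝ) : Fin k → ℝ :=
  at' - ηa • Ga vstar astar wt at'

lemma dotp_self_nonneg {n : ℕ} (u : Fin n → ℝ) : 0 ≤ dotp u u :=
  Finset.sum_nonneg fun _ _ => mul_self_nonneg _

lemma dotp_sq_le {n : ℕ} (u v : Fin n → ℝ) : (dotp u v)^2 ≤ dotp u u * dotp v v := by
  have := Finset.sum_mul_sq_le_sq_mul_sq Finset.univ u v
  simpa [dotp, sq] using this

lemma dotp_expand {n : ℕ} (x y : Fin n → ℝ) (c : ℝ) :
    dotp (fun i => x i - c * y i) (fun i => x i - c * y i)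
      = dotp x x - 2*c*(dotp x y) + c^2 * dotp y y := by
  unfold dotp
  rw [Finset.sum_congr rfl (fun i _ => show (fun i => x i - c * y i) i * (fun i => x i - c * y i) i
      = x i * x i - 2*c*(x i * y i) + c^2 * (y i * y i) from by simp; ring),
    Finset.sum_add_distrib, Finset.sum_sub_distrib, ← Finset.mul_sum, ← Finset.mul_sum]

lemma dotp_sub {n : ℕ} (x y : Fin n → ℝ) :
    dotp (x - y) (x - y) = dotp x x - 2*(dotp x y) + dotp y y := by
  have h := dotp_expand x y 1
  rw [show (x - y) = fun i => x i - 1 * y i from funext fun i => by simp]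
  simpa using h

lemma sum_aff_sq {k : ℕ} (e : Fin k → ℝ) (r c : ℝ) :
    dotp (fun i => r * e i - c) (fun i => r * e i - c)
      = r^2 * dotp e e - 2*r*c*(∑ i, e i) + (k:ℝ)*c^2 := by
  unfold dotp
  rw [Finset.sum_congr rfl (fun i _ => show (fun i => r * e i - c) i * (fun i => r * e i - c) i
      = r^2*(e i * e i) - 2*r*c* e i + c^2 from by simp; ring),
    Finset.sum_add_distrib, Finset.sum_sub_distrib, ← Finset.mul_sum, ← Finset.mul_sum,
    Finset.sum_const, Finset.card_univ, Fintype.card_fin, nsmul_eq_mul]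

lemma mul_cos_le_sin {x : ℝ} (h0 : 0 ≤ x) (h1 : x ≤ π) : x * Real.cos x ≤ Real.sin x := by
  rcases le_or_gt (Real.cos x) 0 with hc | hc
  · have := Real.sin_nonneg_of_nonneg_of_le_pi h0 h1
    nlinarith
  · have hx2 : x < π / 2 := by
      by_contra h
      push_neg at h
      have := Real.cos_nonpos_of_pi_div_two_le_of_le h (by linarith [Real.pi_pos])
      linarith
    rcases eq_or_lt_of_le h0 with rfl | h0'
    · simp
    · have := Real.lt_tan h0' hx2
      rw [Real.tan_eq_sin_div_cos, lt_div_iff₀ hc] at this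
      linarith

lemma gker_le_pi {x : ℝ} (h0 : 0 ≤ x) (h1 : x ≤ π) : gker x ≤ π := by
  unfold gker
  rcases le_or_gt 0 (Real.cos x) with hc | hc
  · nlinarith [Real.cos_le_one x, Real.sin_le h0]
  · nlinarith [Real.sin_le_one x, Real.pi_gt_three]

lemma pi_sub_gker_le {x : ℝ} (h0 : 0 ≤ x) (h1 : x ≤ π) :
    π - gker x ≤ π * (1 - Real.cos x) := by
  have := mul_cos_le_sin h0 h1
  unfold gker; nlinarith

lemma contraction_bound (ρ γ kk S E : ℝ) (hγ : 0 < γ) (hγk : γ*kk ≤ 2*ρ) :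
    ρ^2*E - 2*ρ*(γ*S)*S + kk*(γ*S)^2 ≤ ρ^2*E := by
  nlinarith [mul_nonneg (mul_nonneg hγ.le (sq_nonneg S)) (by linarith : (0:ℝ) ≤ 2*ρ - γ*kk)]

lemma step_bound (U P s R ρn ε : ℝ) (hU0 : 0 ≤ U) (hUle : U ≤ ρn^2) (hP : P^2 ≤ U*R^2)
    (hs0 : 0 ≤ s) (hsR : s*R ≤ ε) (hR0 : 0 ≤ R) (hρn : 0 ≤ ρn) (hε0 : 0 ≤ ε) :
    U - 2*s*P + s^2*R^2 ≤ (ρn + ε)^2 := by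
  have h1 : (s*R)^2 ≤ ε^2 := by
    nlinarith [mul_le_mul hsR hsR (mul_nonneg hs0 hR0) hε0]
  have h2 : s^2 * P^2 ≤ s^2 * (U * R^2) := mul_le_mul_of_nonneg_left hP (sq_nonneg s)
  have h3 : (s*R)^2 * U ≤ ε^2 * U := mul_le_mul_of_nonneg_right h1 hU0
  have h4 : ε^2 * U ≤ ε^2 * ρn^2 := mul_le_mul_of_nonneg_left hUle (sq_nonneg ε)
  have h5 : (s*P)^2 ≤ (ε*ρn)^2 := by nlinarith [h2, h3, h4]
  have h6 : -(s*P) ≤ ε*ρn := by nlinarith [h5, mul_nonneg hε0 hρn]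
  nlinarith [h1, h6, hUle]

lemma sq_split (x y z : ℝ) (hx : 0 ≤ x) (hxB : x ≤ y + z) (hy : 0 ≤ y) (hz : 0 ≤ z) :
    x^2 ≤ 2*y^2 + 2*z^2 := by nlinarith [sq_nonneg (y - z)]

set_option maxHeartbeats 4000000 in
/-- Lemma: linear convergence of `a_t`. With `w* = v* − 𝟙/√p`, there are constants
`C, c > 0` depending only on `‖a*‖₂` and `M` (the paper gives `C = 5`, `c = 4`)
such that if `η ≤ 5π²/(4(k+π−1)²)` and, for all `t`, `‖w_t + 𝟙/√p‖₂ = 1`,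
`‖w_t − w*‖₂² ≤ δ` and `m ≤ a_tᵀa* ≤ M`, then `‖a_t − a*‖₂² ≤ Cδ` for all
`t ≥ (c/η)log(‖a_0 − a*‖₂²/δ)`. -/
theorem stmt15 :
    ∀ R Mv : ℝ, ∃ C > (0 : ℝ), ∃ c > (0 : ℝ),
      ∀ (p k : ℕ), 0 < p → 0 < k →
      ∀ (vstar : Fin p → ℝ) (astar : Fin k → ℝ),
        nrm vstar = 1 → nrm astar = R →
      ∀ m M δ : ℝ, 0 < m → m ≤ M → M = Mv → 0 < δ →
      ∀ η : ℝ, 0 < η → η ≤ 5 * π ^ 2 / (4 * (k + π - 1) ^ 2) →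
      ∀ (w : ℕ → Fin p → ℝ) (a : ℕ → Fin k → ℝ),
        (∀ t, a (t + 1) = aStep vstar astar η (w t) (a t)) →
        (∀ t, nrm (w t + sc p) = 1) →
        (∀ t, dotp (w t - (vstar - sc p)) (w t - (vstar - sc p)) ≤ δ) →
        (∀ t, m ≤ dotp (a t) astar ∧ dotp (a t) astar ≤ M) →
      ∀ t : ℕ, (c / η) * Real.log (dotp (a 0 - astar) (a 0 - astar) / δ) ≤ (t : ℝ) →
        dotp (a t - astar) (a t - astar) ≤ C * δ := by
  intro R Mv
  have hπ3 : (3:ℝ) < π := Real.pi_gt_three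
  have hπpos : (0:ℝ) < π := by linarith
  refine ⟨2 + 2*π^2*R^2/(π-1)^2, by positivity, 4, by norm_num, ?_⟩
  intro p k hp hk vstar astar hvs hasR m M δ hm hmM hM hδ η hη hηle
  intro w a hastep hwnorm hwdelta hma t ht
  clear hma hm hmM hM
  -- basic constants
  set γ := η / (2*π) with hγ; clear_value γ
  set β := γ * (π - 1) with hβ; clear_value β
  set ρ := 1 - β with hρdef; clear_value ρ
  have hγpos : 0 < γ := by rw [hγ]; positivity
  have hβpos : 0 < β := by rw [hβ]; exact mul_pos hγpos (by linarith)
  have hk1 : (1:ℝ) ≤ (k:ℝ) := by exact_mod_cast hk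
  have hη2 : η * (4 * ((k:ℝ) + π - 1)^2) ≤ 5 * π^2 := by
    have h := hηle
    rw [le_div_iff₀ (by nlinarith)] at h
    linarith
  have hQπ : π^2 ≤ ((k:ℝ) + π - 1)^2 := by
    nlinarith [mul_nonneg (by linarith : (0:ℝ) ≤ (k:ℝ) - 1) (by linarith : (0:ℝ) ≤ (k:ℝ) + π - 1 + π)]
  have hη54 : η ≤ 5/4 := by
    nlinarith [mul_le_mul_of_nonneg_left hQπ hη.le, mul_pos hπpos hπpos]
  have hβ58 : β ≤ 5/8 := by
    rw [hβ, hγ, div_mul_eq_mul_div, div_le_iff₀ (by linarith : (0:ℝ) < 2*π)]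
    nlinarith
  have hρ38 : 3/8 ≤ ρ := by rw [hρdef]; linarith
  have hρpos : 0 < ρ := by linarith
  have hρle1 : ρ ≤ 1 := by rw [hρdef]; linarith
  have hγk : γ * (k:ℝ) ≤ 2 * ρ := by
    have hQ2 : π * (k:ℝ) ≤ ((k:ℝ) + π - 1)^2 := by nlinarith [sq_nonneg ((k:ℝ)-1)]
    have h4 : η * (4 * (π * (k:ℝ))) ≤ 5 * π^2 := by
      have := mul_le_mul_of_nonneg_left hQ2 (by positivity : (0:ℝ) ≤ 4*η)
      nlinarith
    have h5 : η * (k:ℝ) ≤ 5*π/4 := by nlinarith [hπpos]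
    rw [hγ, div_mul_eq_mul_div, div_le_iff₀ (by linarith : (0:ℝ) < 2*π)]
    nlinarith [mul_nonneg (by linarith : (0:ℝ) ≤ ρ - 3/8) hπpos.le]
  -- norms and error sequence
  have hR0 : 0 ≤ R := hasR ▸ Real.sqrt_nonneg _
  have hR2 : dotp astar astar = R^2 := by
    rw [← hasR, nrm, Real.sq_sqrt (dotp_self_nonneg astar)]
  have hmin0 : 0 ≤ min δ 4 := le_min hδ.le (by norm_num)
  set ε := γ * (π/2 * min δ 4) * R with hε; clear_value ε
  have hε0 : 0 ≤ ε := by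
    rw [hε]
    exact mul_nonneg (mul_nonneg hγpos.le (by positivity)) hR0
  set N := fun t => Real.sqrt (dotp (a t - astar) (a t - astar)) with hN; clear_value N
  have hNnn : ∀ t, 0 ≤ N t := by intro t; rw [hN]; exact Real.sqrt_nonneg _
  have hNsq : ∀ t, (N t)^2 = dotp (a t - astar) (a t - astar) := by
    intro t; rw [hN]; exact Real.sq_sqrt (dotp_self_nonneg _)
  -- the key one-step contraction
  have hstep : ∀ t, N (t+1) ≤ ρ * N t + ε := by
    intro t
    set q := dotp (sc p + w t) vstar with hq; clear_value q
    have hvv : dotp (sc p + w t) (sc p + w t) = 1 := by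
      have h := hwnorm t
      rw [nrm] at h
      have h2 : dotp (w t + sc p) (w t + sc p) = 1 := by
        nlinarith [Real.sq_sqrt (dotp_self_nonneg (w t + sc p))]
      rw [add_comm (w t)] at h2
      exact h2
    have hvsv : dotp vstar vstar = 1 := by
      rw [nrm] at hvs
      nlinarith [Real.sq_sqrt (dotp_self_nonneg vstar)]
    have hq2 : q^2 ≤ 1 := by
      have h := dotp_sq_le (sc p + w t) vstar
      rw [hvv, hvsv, ← hq] at h
      simpa using h
    have hqle : q ≤ 1 := by nlinarith
    have hqge : -1 ≤ q := by nlinarith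
    have hd : dotp (w t - (vstar - sc p)) (w t - (vstar - sc p)) = 2 - 2*q := by
      have hw2 : w t - (vstar - sc p) = (sc p + w t) - vstar := by
        funext i; simp [Pi.sub_apply, Pi.add_apply]; ring
      rw [hw2, dotp_sub, hvv, hvsv, ← hq]; ring
    have hdle : 2 - 2*q ≤ min δ 4 := by
      refine le_min ?_ (by nlinarith)
      rw [← hd]; exact hwdelta t
    set φt := phiAngle vstar (w t) with hφt; clear_value φt
    have hφq : φt = Real.arccos q := by rw [hφt, phiAngle, ← hq]
    have hφcos : Real.cos φt = q := by rw [hφq]; exact Real.cos_arccos hqge hqle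
    have hφ0 : 0 ≤ φt := by rw [hφq]; exact Real.arccos_nonneg _
    have hφπ : φt ≤ π := by rw [hφq]; exact Real.arccos_le_pi _
    have hg2 : π - gker φt ≤ π/2 * min δ 4 := by
      have h := pi_sub_gker_le hφ0 hφπ
      rw [hφcos] at h
      have h2 : 1 - q ≤ min δ 4 / 2 := by linarith
      have h3 := mul_le_mul_of_nonneg_left h2 hπpos.le
      linarith
    have hg1 : gker φt ≤ π := gker_le_pi hφ0 hφπ
    set s := γ * (π - gker φt) with hs; clear_value s
    have hs0 : 0 ≤ s := by rw [hs]; exact mul_nonneg hγpos.le (by linarith)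
    have hsR : s * R ≤ ε := by
      rw [hε, hs]
      have h1 := mul_le_mul_of_nonneg_left hg2 hγpos.le
      exact mul_le_mul_of_nonneg_right h1 hR0
    set e := a t - astar with he; clear_value e
    set S := (∑ j, a t j) - (∑ j, astar j) with hS; clear_value S
    have heS : ∑ i, e i = S := by
      rw [he, hS]
      simp only [Pi.sub_apply]
      exact Finset.sum_sub_distrib ..
    have hrec : a (t+1) - astar = fun i => (ρ * e i - γ * S) - s * astar i := by
      funext i
      rw [hastep t]
      simp only [aStep, Ga, Pi.sub_apply, Pi.smul_apply, smul_eq_mul, he, hρdef, hβ, hγ, hs, hS, ← hφt]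
      have hπ0 : π ≠ 0 := ne_of_gt hπpos
      field_simp
      ring
    set u := fun i => ρ * e i - γ * S with hu; clear_value u
    set U := dotp u u with hU; clear_value U
    have hU0 : 0 ≤ U := by rw [hU]; exact dotp_self_nonneg u
    have hUle : U ≤ (ρ * N t)^2 := by
      have hexp : U = ρ^2 * dotp e e - 2*ρ*(γ*S)*(∑ i, e i) + (k:ℝ)*(γ*S)^2 := by
        rw [hU, hu]; exact sum_aff_sq e ρ (γ*S)
      have hee : dotp e e = (N t)^2 := by rw [he]; exact (hNsq t).symm
      rw [hexp, heS, hee]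
      have h := contraction_bound ρ γ (k:ℝ) S ((N t)^2) hγpos hγk
      have h2 : (ρ * N t)^2 = ρ^2 * (N t)^2 := by ring
      linarith
    have hP : (dotp u astar)^2 ≤ U * R^2 := by
      have h := dotp_sq_le u astar
      rw [hR2, ← hU] at h
      exact h
    have hE1 : dotp (a (t+1) - astar) (a (t+1) - astar)
        = U - 2*s*(dotp u astar) + s^2 * R^2 := by
      have h := dotp_expand u astar s
      rw [hR2, ← hU] at h
      rw [hrec]
      simp only [hu] at h ⊢
      exact h
    have hE2 : dotp (a (t+1) - astar) (a (t+1) - astar) ≤ (ρ * N t + ε)^2 := by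
      rw [hE1]
      have hρN : 0 ≤ ρ * N t := mul_nonneg hρpos.le (hNnn t)
      exact step_bound U (dotp u astar) s R (ρ * N t) ε hU0 hUle hP hs0 hsR hR0 hρN hε0
    have h2 := Real.sqrt_le_sqrt hE2
    rw [Real.sqrt_sq (add_nonneg (mul_nonneg hρpos.le (hNnn t)) hε0)] at h2
    calc N (t+1) = Real.sqrt (dotp (a (t+1) - astar) (a (t+1) - astar)) := by rw [hN]
      _ ≤ ρ * N t + ε := h2
  -- iterate
  have hB : ∀ t, N t ≤ ρ^t * N 0 + ε/β := by
    intro t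
    induction t with
    | zero =>
      rw [pow_zero, one_mul]
      exact le_add_of_nonneg_right (div_nonneg hε0 hβpos.le)
    | succ n ih =>
      have hβne : β ≠ 0 := ne_of_gt hβpos
      calc N (n+1) ≤ ρ * N n + ε := hstep n
        _ ≤ ρ * (ρ^n * N 0 + ε/β) + ε := by linarith [mul_le_mul_of_nonneg_left ih hρpos.le]
        _ = ρ^(n+1) * N 0 + (ρ * (ε/β) + ε) := by ring
        _ = ρ^(n+1) * N 0 + ε/β := by
            rw [hρdef]; field_simp; ring
  -- bound on (ε/β)²
  have hεβ : (ε/β)^2 ≤ π^2*R^2/(π-1)^2 * δ := by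
    have hπ1 : (π:ℝ) - 1 ≠ 0 := by linarith
    have hγne : γ ≠ 0 := ne_of_gt hγpos
    have hc : ε/β = (π/2 * min δ 4) * R / (π - 1) := by
      rw [hε, hβ]
      field_simp
    have hsq : (0:ℝ) < (π-1)^2 := by nlinarith
    rw [hc, div_pow, div_le_iff₀ hsq]
    have hrhs : π^2*R^2/(π-1)^2 * δ * (π-1)^2 = π^2*R^2*δ := by field_simp
    rw [hrhs]
    have hmm : min δ 4 * min δ 4 ≤ 4 * δ :=
      mul_le_mul (min_le_right _ _) (min_le_left _ _) hmin0 (by norm_num)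
    have hfac : (0:ℝ) ≤ π^2*R^2/4 := by positivity
    have h := mul_le_mul_of_nonneg_left hmm hfac
    nlinarith [h]
  -- decay term
  have hdecay : (ρ^t)^2 * (N 0)^2 ≤ δ := by
    rcases le_or_gt ((N 0)^2) δ with h0 | h0
    · have h1 : ρ^t ≤ 1 := pow_le_one₀ hρpos.le hρle1
      have h2 : 0 ≤ ρ^t := pow_nonneg hρpos.le t
      have h3 : (ρ^t)^2 ≤ 1 := by nlinarith
      have h4 := mul_le_mul_of_nonneg_right h3 (sq_nonneg (N 0))
      linarith [h4]
    · have hE0pos : 0 < (N 0)^2 := lt_trans hδ h0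
      have hLpos : 0 < Real.log ((N 0)^2/δ) := Real.log_pos (by rw [lt_div_iff₀ hδ]; linarith)
      have htlog : (4/η) * Real.log ((N 0)^2/δ) ≤ (t:ℝ) := by
        have h := ht
        rwa [← hNsq 0] at h
      have h4L : 4 * Real.log ((N 0)^2/δ) ≤ (t:ℝ) * η := by
        rw [div_mul_eq_mul_div, div_le_iff₀ hη] at htlog
        linarith [htlog]
      have hlogρ : Real.log ρ ≤ -β := by
        have h := Real.log_le_sub_one_of_pos hρpos
        rw [hρdef] at h ⊢
        linarith
      have h2tβ : Real.log ((N 0)^2/δ) ≤ 2 * (t:ℝ) * β := by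
        rw [hβ, hγ]
        have ht0 : (0:ℝ) ≤ t := Nat.cast_nonneg t
        have hre : 2*(t:ℝ)*(η/(2*π)*(π-1)) = (2*(t:ℝ)*(η*(π-1)))/(2*π) := by ring
        rw [hre, le_div_iff₀ (by linarith : (0:ℝ) < 2*π)]
        have hp1 : 0 ≤ ((t:ℝ)*η - 4*Real.log ((N 0)^2/δ)) * (π - 1) :=
          mul_nonneg (by linarith) (by linarith)
        have hp2 : 0 ≤ Real.log ((N 0)^2/δ) * (6*π - 8) :=
          mul_nonneg hLpos.le (by linarith)
        nlinarith [hp1, hp2]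
      have hexp : (ρ^t)^2 ≤ δ / (N 0)^2 := by
        have hρt : ρ^t = Real.exp ((t:ℝ) * Real.log ρ) := by
          rw [Real.exp_nat_mul, Real.exp_log hρpos]
        have hsq : (ρ^t)^2 = Real.exp (2 * (t:ℝ) * Real.log ρ) := by
          rw [hρt, pow_two, ← Real.exp_add]
          congr 1
          ring
        rw [hsq]
        have hle : 2 * (t:ℝ) * Real.log ρ ≤ - Real.log ((N 0)^2/δ) := by
          have ht0 : (0:ℝ) ≤ (t:ℝ) := Nat.cast_nonneg t
          have h := mul_le_mul_of_nonneg_left hlogρ (by linarith : (0:ℝ) ≤ 2*(t:ℝ))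
          nlinarith [h, h2tβ]
        calc Real.exp (2 * (t:ℝ) * Real.log ρ) ≤ Real.exp (- Real.log ((N 0)^2/δ)) :=
              Real.exp_le_exp.mpr hle
          _ = δ / (N 0)^2 := by
              rw [Real.exp_neg, Real.exp_log (div_pos hE0pos hδ), inv_div]
      calc (ρ^t)^2 * (N 0)^2 ≤ (δ / (N 0)^2) * (N 0)^2 :=
            mul_le_mul_of_nonneg_right hexp (sq_nonneg _)
        _ = δ := by
            have : (N 0)^2 ≠ 0 := ne_of_gt hE0pos
            exact div_mul_cancel₀ δ this
  -- finish
  have hEt : dotp (a t - astar) (a t - astar) ≤ 2*((ρ^t)^2*(N 0)^2) + 2*(ε/β)^2 := by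
    have h1 := hB t
    rw [← hNsq t]
    have h := sq_split (N t) (ρ^t * N 0) (ε/β) (hNnn t) h1
      (mul_nonneg (pow_nonneg hρpos.le t) (hNnn 0)) (div_nonneg hε0 hβpos.le)
    nlinarith [h]
  calc dotp (a t - astar) (a t - astar) ≤ 2*((ρ^t)^2*(N 0)^2) + 2*(ε/β)^2 := hEt
    _ ≤ 2*δ + 2*(π^2*R^2/(π-1)^2 * δ) := by linarith
    _ = (2 + 2*π^2*R^2/(π-1)^2) * δ := by ring
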